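/- Under the hypotheses of the previous fact, if additionally a processor from a different group computes its name from a snapshot T (comparable to both S₁ and S₂) as |T|(|T|-1)/2 + rank, with 1 ≤ rank ≤ |T|, and processors of group g compute names from S₁ and S₂ the same way, then the name computed from T differs from the names computed from S₁ and from S₂. -/

import Mathlib

theorem lt_and_lt_or_lt_and_lt_of_not_le {β : Type*} [PartialOrder β] {a b c : β}
    (hab : ¬ a ≤ b) (hba : ¬ b ≤ a) (hca : c ≤ a ∨ a ≤ c) (hcb : c ≤ b ∨ b ≤ c) :
    (c < a ∧ c < b) ∨ (a < c ∧ b < c) := by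
  rcases hca with hca | hac <;> rcases hcb with hcb | hbc
  · exact .inl ⟨hca.lt_of_not_ge fun hac => hab (hac.trans hcb),
      hcb.lt_of_not_ge fun hbc => hba (hbc.trans hca)⟩
  · exact absurd (hbc.trans hca) hba
  · exact absurd (hac.trans hcb) hab
  · exact .inr ⟨hac.lt_of_not_ge fun hca => hba (hbc.trans hca),
      hbc.lt_of_not_ge fun hcb => hab (hac.trans hcb)⟩

theorem Nat.choose_two_add_lt_choose_two_add {a b ra rb : ℕ} (hra : ra ≤ a) (hrb : 0 < rb)
    (hab : a < b) : a.choose 2 + ra < b.choose 2 + rb :=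
  calc a.choose 2 + ra ≤ a.choose 2 + a := by omega
    _ = (a + 1).choose 2 := by rw [Nat.choose_succ_succ', Nat.choose_one_right, add_comm]
    _ ≤ b.choose 2 := Nat.choose_le_choose 2 hab
    _ < b.choose 2 + rb := by omega

theorem Nat.mul_pred_div_two_add_lt {a b ra rb : ℕ} (hra : ra ≤ a) (hrb : 1 ≤ rb) (hab : a < b) :
    a * (a - 1) / 2 + ra < b * (b - 1) / 2 + rb := by
  simpa only [← Nat.choose_two_right] using Nat.choose_two_add_lt_choose_two_add hra hrb hab

theorem stmt_5_general {α : Type*} (S₁ S₂ T : Finset α)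
    (hinc₁ : ¬ S₁ ⊆ S₂) (hinc₂ : ¬ S₂ ⊆ S₁)
    (hT₁ : T ⊆ S₁ ∨ S₁ ⊆ T) (hT₂ : T ⊆ S₂ ∨ S₂ ⊆ T)
    (rT r₁ r₂ : ℕ)
    (hrT : 1 ≤ rT) (hrT' : rT ≤ T.card)
    (hr₁ : 1 ≤ r₁) (hr₁' : r₁ ≤ S₁.card)
    (hr₂ : 1 ≤ r₂) (hr₂' : r₂ ≤ S₂.card) :
    T.card * (T.card - 1) / 2 + rT ≠ S₁.card * (S₁.card - 1) / 2 + r₁ ∧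
    T.card * (T.card - 1) / 2 + rT ≠ S₂.card * (S₂.card - 1) / 2 + r₂ := by
  rcases lt_and_lt_or_lt_and_lt_of_not_le hinc₁ hinc₂ hT₁ hT₂ with ⟨h₁, h₂⟩ | ⟨h₁, h₂⟩
  · exact ⟨(Nat.mul_pred_div_two_add_lt hrT' hr₁ (Finset.card_lt_card h₁)).ne,
      (Nat.mul_pred_div_two_add_lt hrT' hr₂ (Finset.card_lt_card h₂)).ne⟩
  · exact ⟨(Nat.mul_pred_div_two_add_lt hr₁' hrT (Finset.card_lt_card h₁)).ne',
      (Nat.mul_pred_div_two_add_lt hr₂' hrT (Finset.card_lt_card h₂)).ne'⟩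

/-- With `S₁, S₂` incomparable snapshots containing `g` and `T` comparable to both,
names computed as `|·|(|·|-1)/2 + rank` from `T` differ from those from `S₁` and `S₂`. -/
theorem stmt_5 {α : Type*} [DecidableEq α] (S₁ S₂ T : Finset α) (g : α)
    (hg₁ : g ∈ S₁) (hg₂ : g ∈ S₂)
    (hinc₁ : ¬ S₁ ⊆ S₂) (hinc₂ : ¬ S₂ ⊆ S₁)
    (hT₁ : T ⊆ S₁ ∨ S₁ ⊆ T) (hT₂ : T ⊆ S₂ ∨ S₂ ⊆ T)
    (rT r₁ r₂ : ℕ)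
    (hrT : 1 ≤ rT) (hrT' : rT ≤ T.card)
    (hr₁ : 1 ≤ r₁) (hr₁' : r₁ ≤ S₁.card)
    (hr₂ : 1 ≤ r₂) (hr₂' : r₂ ≤ S₂.card) :
    T.card * (T.card - 1) / 2 + rT ≠ S₁.card * (S₁.card - 1) / 2 + r₁ ∧
    T.card * (T.card - 1) / 2 + rT ≠ S₂.card * (S₂.card - 1) / 2 + r₂ :=
  stmt_5_general S₁ S₂ T hinc₁ hinc₂ hT₁ hT₂ rT r₁ r₂ hrT hrT' hr₁ hr₁' hr₂ hr₂'
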